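/- Let T > 0, t ∈ (0,T), and x, x₀ ∈ ℝ. Define p₊(x₀) = (2π)^{−1/2} Φ(x₀/√T) and p₋(x₀) = (2π)^{−1/2} Φ(−x₀/√T), where Φ(u) = ∫_{−∞}^{u} e^{−s²/2} ds; then p₊(x₀) + p₋(x₀) = 1, and the Gaussian heat kernel decomposes as the p-mixture of the two oppositely skewed densities: (2πt)^{−1/2} e^{−(x−x₀)²/(2t)} = p₋(x₀) · (2πt)^{−1/2} e^{−(x−x₀)²/(2t)} Φ(−x/√(T−t))/Φ(−x₀/√T) + p₊(x₀) · (2πt)^{−1/2} e^{−(x−x₀)²/(2t)} Φ(x/√(T−t))/Φ(x₀/√T). -/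

import Mathlib

/-- Unnormalized Gaussian cumulative integral: `Φ u = ∫_{-∞}^u e^{-s²/2} ds`. -/
noncomputable def Phi (u : ℝ) : ℝ := ∫ s in Set.Iic u, Real.exp (-s ^ 2 / 2)

/-- Bernoulli mixing probabilities of Corollary 1.2: `p_±(x₀) = (2π)^{-1/2} Φ(±x₀/√T)`. -/
noncomputable def pB (T x₀ : ℝ) (ε : ℝ) : ℝ :=
  (Real.sqrt (2 * Real.pi))⁻¹ * Phi (ε * x₀ / Real.sqrt T)

open MeasureTheory Set

lemma gauss_eq : (fun s : ℝ => Real.exp (-s ^ 2 / 2)) = fun s => Real.exp (-(1/2 : ℝ) * s ^ 2) := by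
  funext s; ring_nf

lemma gauss_int : Integrable (fun s : ℝ => Real.exp (-s ^ 2 / 2)) := by
  rw [gauss_eq]; exact integrable_exp_neg_mul_sq (by norm_num)

lemma Phi_pos (u : ℝ) : 0 < Phi u := by
  rw [Phi, setIntegral_pos_iff_support_of_nonneg_ae]
  · have : Function.support (fun s : ℝ => Real.exp (-s ^ 2 / 2)) = Set.univ := by
      ext s; simp [Real.exp_ne_zero]
    rw [this, Set.univ_inter]
    simp [Real.volume_Iic]
  · exact Filter.Eventually.of_forall fun s => (Real.exp_pos _).le
  · exact gauss_int.integrableOn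

lemma Phi_add (u : ℝ) : Phi u + Phi (-u) = Real.sqrt (2 * Real.pi) := by
  have h2 : Phi (-u) = ∫ s in Set.Ioi u, Real.exp (-s ^ 2 / 2) := by
    have := integral_comp_neg_Iic (-u) (fun s : ℝ => Real.exp (-s ^ 2 / 2))
    simp only [neg_neg] at this
    rw [Phi, ← this]
    congr 1; funext s; ring_nf
  rw [Phi, h2, intervalIntegral.integral_Iic_add_Ioi gauss_int.integrableOn gauss_int.integrableOn]
  rw [gauss_eq, integral_gaussian]
  rw [show Real.pi / (1/2 : ℝ) = 2 * Real.pi by ring]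

/-- Corollary 1.2: `p₊ + p₋ = 1`, and the Gaussian heat kernel is the `p`-mixture of the
two oppositely skewed extended skew-Normal densities `Q^±`. -/
theorem stmt_6 (T t x x₀ : ℝ) (hT : 0 < T) (ht : t ∈ Set.Ioo (0 : ℝ) T) :
    pB T x₀ 1 + pB T x₀ (-1) = 1 ∧
    (Real.sqrt (2 * Real.pi * t))⁻¹ * Real.exp (-(x - x₀) ^ 2 / (2 * t))
      = pB T x₀ (-1) *
          ((Real.sqrt (2 * Real.pi * t))⁻¹ * Real.exp (-(x - x₀) ^ 2 / (2 * t)) *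
            (Phi (-x / Real.sqrt (T - t)) / Phi (-x₀ / Real.sqrt T)))
        + pB T x₀ 1 *
          ((Real.sqrt (2 * Real.pi * t))⁻¹ * Real.exp (-(x - x₀) ^ 2 / (2 * t)) *
            (Phi (x / Real.sqrt (T - t)) / Phi (x₀ / Real.sqrt T))) := by
  have h2π : Real.sqrt (2 * Real.pi) ≠ 0 := by positivity
  have ha := (Phi_pos (x₀ / Real.sqrt T)).ne'
  have hb := (Phi_pos (-(x₀ / Real.sqrt T))).ne'
  have hs := Phi_add (x / Real.sqrt (T - t))
  have h0 := Phi_add (x₀ / Real.sqrt T)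
  simp only [pB, one_mul, neg_mul, neg_div]
  set c := Real.sqrt (2 * Real.pi) with hc
  constructor
  · rw [← mul_add, h0, inv_mul_cancel₀ h2π]
  · have key : ∀ p q k : ℝ, p ≠ 0 → c⁻¹ * p * (k * (q / p)) = c⁻¹ * k * q := by
      intro p q k hp; field_simp
    rw [key _ _ _ hb, key _ _ _ ha]
    set K := (Real.sqrt (2 * Real.pi * t))⁻¹ * Real.exp (-((x - x₀) ^ 2 / (2 * t))) with hK
    have : c⁻¹ * K * Phi (-(x / Real.sqrt (T - t))) + c⁻¹ * K * Phi (x / Real.sqrt (T - t))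
        = c⁻¹ * (Phi (x / Real.sqrt (T - t)) + Phi (-(x / Real.sqrt (T - t)))) * K := by ring
    rw [this, hs, inv_mul_cancel₀ h2π, one_mul]
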